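/- arXiv:1208.2787 — 4 statements merged into one kernel-verified Lean document; each statement's English description precedes it below -/
import Mathlib

section
/- (Deterministic form of Part I of Theorem 1) Let k ≥ 2, F_q a finite field, and W = F_q^{2k}. Let P_{i,j} ∈ W for i ∈ {2,…,k+2}, j ∈ {1,2}, let f : {2,…,k+2} → {1,2}, let γ_{i,j} ∈ F_q for i ∈ {2,…,k+2}, j ∈ {1,2}, and define P′_{1,j} = Σ_{i=2}^{k+2} γ_{i,j} P_{i,f(i)} for j = 1, 2. If the 2k vectors {P_{i,1}, P_{i,2} : 2 ≤ i ≤ k} ∪ {P_{k+1,f(k+1)}, P_{k+2,f(k+2)}} are linearly independent and γ_{k+1,1}γ_{k+2,2} ≠ γ_{k+1,2}γ_{k+2,1}, then the 2k vectors {P′_{1,1}, P′_{1,2}} ∪ {P_{i,1}, P_{i,2} : 2 ≤ i ≤ k} are linearly independent. -/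
/-- A collection of chunks (indexed by node number × chunk-position, chunk-position
`0` standing for the paper's chunk 1 and `1` for chunk 2) is decodable if the
corresponding vectors in `W = Fq^{2k}` are linearly independent. -/
def Decodable {d : ℕ} {Fq : Type*} [Field Fq]
    (P : ℕ → Fin 2 → Fin d → Fq) (C : Finset (ℕ × Fin 2)) : Prop :=
  LinearIndependent Fq (fun x : {y // y ∈ C} => P x.1.1 x.1.2)

/-- deterministic form of Part I of Theorem 1: if the `2k` vectors
`{P_{i,1}, P_{i,2} : 2 ≤ i ≤ k} ∪ {P_{k+1,f(k+1)}, P_{k+2,f(k+2)}}` are linearly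
independent and `γ_{k+1,1}γ_{k+2,2} ≠ γ_{k+1,2}γ_{k+2,1}`, then the `2k` vectors
`{P′_{1,1}, P′_{1,2}} ∪ {P_{i,1}, P_{i,2} : 2 ≤ i ≤ k}` are linearly independent,
where `P′_{1,j} = Σ_{i=2}^{k+2} γ_{i,j} P_{i,f(i)}`. -/
theorem stmt7 (k : ℕ) (hk : 2 ≤ k) (Fq : Type*) [Field Fq]
    (P : ℕ → Fin 2 → Fin (2 * k) → Fq) (f : ℕ → Fin 2) (γ : ℕ → Fin 2 → Fq)
    (P' : Fin 2 → Fin (2 * k) → Fq)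
    (hP' : ∀ j, P' j = ∑ i ∈ Finset.Icc 2 (k + 2), γ i j • P i (f i))
    (hindep : Decodable P ((Finset.Icc 2 k ×ˢ Finset.univ) ∪
      {((k + 1 : ℕ), f (k + 1)), ((k + 2 : ℕ), f (k + 2))}))
    (hγ : γ (k + 1) 0 * γ (k + 2) 1 ≠ γ (k + 1) 1 * γ (k + 2) 0) :
    Decodable (fun i j => if i = 1 then P' j else P i j)
      (Finset.Icc 1 k ×ˢ Finset.univ) := by
  classical
  unfold Decodable at hindep ⊢
  rw [Fintype.linearIndependent_iff] at hindep ⊢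
  set A : Finset (ℕ × Fin 2) := Finset.Icc 2 k ×ˢ Finset.univ with hA
  set C : Finset (ℕ × Fin 2) :=
    A ∪ {((k + 1 : ℕ), f (k + 1)), ((k + 2 : ℕ), f (k + 2))} with hC
  set D : Finset (ℕ × Fin 2) := Finset.Icc 1 k ×ˢ Finset.univ with hDdef
  intro g hg
  obtain ⟨G, hG⟩ : ∃ G : ℕ × Fin 2 → Fq,
      G = fun p => if h : p ∈ D then g ⟨p, h⟩ else 0 := ⟨_, rfl⟩
  obtain ⟨c, hc⟩ : ∃ c : ℕ → Fq,
      ∀ i, c i = G (1, 0) * γ i 0 + G (1, 1) * γ i 1 := ⟨_, fun _ => rfl⟩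
  obtain ⟨H, hH⟩ : ∃ H : ℕ × Fin 2 → Fq, ∀ p,
      H p = (if p ∈ A then G p else 0) + (if p.2 = f p.1 then c p.1 else 0) :=
    ⟨_, fun _ => rfl⟩
  have hGp : ∀ (p : ℕ × Fin 2) (h : p ∈ D), G p = g ⟨p, h⟩ := by
    intro p h; rw [hG]; simp [h]
  -- transfer hg to a sum over D
  have hg' : ∑ p ∈ D, G p • (if p.1 = 1 then P' p.2 else P p.1 p.2) = 0 := by
    rw [← Finset.sum_coe_sort D, ← hg]
    exact Finset.sum_congr rfl fun x _ => by rw [hGp x.1 x.2]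
  have h1notin : (1 : ℕ) ∉ Finset.Icc 2 k := by simp
  have hIcc1 : Finset.Icc 1 k = insert 1 (Finset.Icc 2 k) := by
    ext x; simp only [Finset.mem_Icc, Finset.mem_insert]; omega
  have hIcc2 : Finset.Icc 2 (k + 2) = insert (k+1) (insert (k+2) (Finset.Icc 2 k)) := by
    ext x; simp only [Finset.mem_Icc, Finset.mem_insert]; omega
  have hk1A : ∀ j : Fin 2, ((k+1 : ℕ), j) ∉ A := by
    intro j
    simp only [hA, Finset.mem_product, Finset.mem_Icc, Finset.mem_univ, and_true]
    omega
  have hk2A : ∀ j : Fin 2, ((k+2 : ℕ), j) ∉ A := by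
    intro j
    simp only [hA, Finset.mem_product, Finset.mem_Icc, Finset.mem_univ, and_true]
    omega
  -- the common value of both sums
  have hDsum : ∑ p ∈ D, G p • (if p.1 = 1 then P' p.2 else P p.1 p.2) =
      (∑ p ∈ A, G p • P p.1 p.2) + ((∑ i ∈ Finset.Icc 2 k, c i • P i (f i)) +
        (c (k+1) • P (k+1) (f (k+1)) + c (k+2) • P (k+2) (f (k+2)))) := by
    rw [hDdef, Finset.sum_product, hIcc1, Finset.sum_insert h1notin]
    have e1 : ∑ j : Fin 2, G (1, j) • (if (1:ℕ) = 1 then P' j else P 1 j)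
        = ∑ i ∈ Finset.Icc 2 k, c i • P i (f i) +
          (c (k+1) • P (k+1) (f (k+1)) + c (k+2) • P (k+2) (f (k+2))) := by
      rw [Fin.sum_univ_two, if_pos rfl, if_pos rfl, hP' 0, hP' 1,
        Finset.smul_sum, Finset.smul_sum, ← Finset.sum_add_distrib]
      have : ∀ i ∈ Finset.Icc 2 (k+2),
          G (1,0) • (γ i 0 • P i (f i)) + G (1,1) • (γ i 1 • P i (f i))
          = c i • P i (f i) := by
        intro i _
        rw [smul_smul, smul_smul, ← add_smul, hc]
      rw [Finset.sum_congr rfl this, hIcc2, Finset.sum_insert, Finset.sum_insert]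
      · abel
      · simp only [Finset.mem_Icc]; omega
      · simp only [Finset.mem_insert, Finset.mem_Icc]; omega
    have e2 : ∀ i ∈ Finset.Icc 2 k,
        ∑ j : Fin 2, G (i, j) • (if i = 1 then P' j else P i j)
        = ∑ j : Fin 2, G (i, j) • P i j := by
      intro i hi
      have : i ≠ 1 := by simp only [Finset.mem_Icc] at hi; omega
      simp [this]
    rw [Finset.sum_congr rfl e2, e1, hA, Finset.sum_product]
    abel
  have hCsum : ∑ p ∈ C, H p • P p.1 p.2 =
      (∑ p ∈ A, G p • P p.1 p.2) + ((∑ i ∈ Finset.Icc 2 k, c i • P i (f i)) +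
        (c (k+1) • P (k+1) (f (k+1)) + c (k+2) • P (k+2) (f (k+2)))) := by
    have hdisj : Disjoint A ({((k + 1 : ℕ), f (k + 1)), ((k + 2 : ℕ), f (k + 2))} :
        Finset (ℕ × Fin 2)) := by
      rw [Finset.disjoint_right]
      intro p hp
      simp only [Finset.mem_insert, Finset.mem_singleton] at hp
      rcases hp with h | h <;> subst h
      · exact hk1A _
      · exact hk2A _
    have hne : ((k + 1 : ℕ), f (k + 1)) ≠ ((k + 2 : ℕ), f (k + 2)) := by
      intro h
      have := congrArg Prod.fst h
      simp at this
    rw [hC, Finset.sum_union hdisj, Finset.sum_pair hne]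
    have hHk1 : H ((k+1 : ℕ), f (k+1)) = c (k+1) := by
      rw [hH]; simp [hk1A]
    have hHk2 : H ((k+2 : ℕ), f (k+2)) = c (k+2) := by
      rw [hH]; simp [hk2A]
    have hAsum : ∑ p ∈ A, H p • P p.1 p.2 =
        (∑ p ∈ A, G p • P p.1 p.2) + ∑ i ∈ Finset.Icc 2 k, c i • P i (f i) := by
      have : ∀ p ∈ A, H p • P p.1 p.2 =
          G p • P p.1 p.2 + (if p.2 = f p.1 then c p.1 • P p.1 p.2 else 0) := by
        intro p hp
        rw [hH, if_pos hp, add_smul, ite_smul, zero_smul]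
      rw [Finset.sum_congr rfl this, Finset.sum_add_distrib]
      congr 1
      rw [hA, Finset.sum_product]
      refine Finset.sum_congr rfl fun i _ => ?_
      simp
    rw [hAsum, hHk1, hHk2]
    abel
  have key : ∑ p ∈ C, H p • P p.1 p.2 = 0 := by rw [hCsum, ← hDsum, hg']
  have hH0 : ∀ p ∈ C, H p = 0 := by
    intro p hp
    exact hindep (fun x => H x.1)
      ((Finset.sum_coe_sort C (fun p => H p • P p.1 p.2)).trans key) ⟨p, hp⟩
  have hck1 : c (k+1) = 0 := by
    have h0 := hH0 ((k+1 : ℕ), f (k+1)) (by rw [hC]; simp)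
    rwa [hH, if_neg (hk1A _), if_pos rfl, zero_add] at h0
  have hck2 : c (k+2) = 0 := by
    have h0 := hH0 ((k+2 : ℕ), f (k+2)) (by rw [hC]; simp)
    rwa [hH, if_neg (hk2A _), if_pos rfl, zero_add] at h0
  rw [hc] at hck1
  rw [hc] at hck2
  have hdet : γ (k+1) 0 * γ (k+2) 1 - γ (k+1) 1 * γ (k+2) 0 ≠ 0 := sub_ne_zero.mpr hγ
  have haz : G (1, 0) = 0 := by
    have hx : G (1, 0) * (γ (k+1) 0 * γ (k+2) 1 - γ (k+1) 1 * γ (k+2) 0) =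
        γ (k+2) 1 * (G (1, 0) * γ (k+1) 0 + G (1, 1) * γ (k+1) 1) -
          γ (k+1) 1 * (G (1, 0) * γ (k+2) 0 + G (1, 1) * γ (k+2) 1) := by ring
    rw [hck1, hck2, mul_zero, mul_zero, sub_zero] at hx
    exact (mul_eq_zero.mp hx).resolve_right hdet
  have hbz : G (1, 1) = 0 := by
    have hx : G (1, 1) * (γ (k+1) 0 * γ (k+2) 1 - γ (k+1) 1 * γ (k+2) 0) =
        γ (k+1) 0 * (G (1, 0) * γ (k+2) 0 + G (1, 1) * γ (k+2) 1) -
          γ (k+2) 0 * (G (1, 0) * γ (k+1) 0 + G (1, 1) * γ (k+1) 1) := by ring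
    rw [hck1, hck2, mul_zero, mul_zero, sub_zero] at hx
    exact (mul_eq_zero.mp hx).resolve_right hdet
  have hczero : ∀ i, c i = 0 := by intro i; rw [hc, haz, hbz]; ring
  have hG0 : ∀ p ∈ D, G p = 0 := by
    intro p hp
    rcases p with ⟨i, j⟩
    by_cases hi : i = 1
    · subst hi
      fin_cases j
      · exact haz
      · exact hbz
    · have hpA : (i, j) ∈ A := by
        rw [hDdef] at hp
        simp only [hA, Finset.mem_product, Finset.mem_Icc, Finset.mem_univ,
          and_true] at hp ⊢
        omega
      have h0 := hH0 (i, j) (by rw [hC]; exact Finset.mem_union_left _ hpA)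
      rw [hH, if_pos hpA, hczero] at h0
      simpa using h0
  intro x
  rw [← hGp x.1 x.2]
  exact hG0 x.1 x.2
end

section
/- (Appendix: the repaired configuration satisfies the MDS property) Let k ≥ 2, n = k+2, F_q a finite field, and W = F_q^{2k}. Let P_{i,j} ∈ W for i ∈ {1,…,k+2}, j ∈ {1,2} be 2(k+2) vectors such that any 2k of them are linearly independent. Let γ_{i,j} ∈ F_q for i ∈ {2,…,k+2}, j ∈ {1,2}, and define P′_{1,1} = Σ_{i=2}^{k+2} γ_{i,1} P_{i,1} and P′_{1,2} = Σ_{i=2}^{k+2} γ_{i,2} P_{i,1}. If γ_{i,1}γ_{j,2} ≠ γ_{i,2}γ_{j,1} for all distinct i, j ∈ {2,…,k+2}, then the repaired configuration satisfies the MDS property; in particular, for every (k−1)-element subset S ⊆ {2,…,k+2}, the 2k vectors {P′_{1,1}, P′_{1,2}} ∪ {P_{s,1}, P_{s,2} : s ∈ S} are linearly independent. -/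
lemma decodable_iff {d : ℕ} {Fq : Type*} [Field Fq]
    (P : ℕ → Fin 2 → Fin d → Fq) (C : Finset (ℕ × Fin 2)) :
    Decodable P C ↔ ∀ g : ℕ × Fin 2 → Fq,
      ∑ y ∈ C, g y • P y.1 y.2 = 0 → ∀ y ∈ C, g y = 0 := by
  rw [Decodable, Fintype.linearIndependent_iff]
  constructor
  · intro h g hg y hy
    refine h (fun x => g x.1) ?_ ⟨y, hy⟩
    rw [← hg, ← Finset.sum_coe_sort C (fun y => g y • P y.1 y.2)]
  · intro h g hg x
    have := h (fun y => if hy : y ∈ C then g ⟨y, hy⟩ else 0) ?_ x.1 x.2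
    · simpa using this
    · rw [← Finset.sum_coe_sort C
        (fun y => (if hy : y ∈ C then g ⟨y, hy⟩ else 0) • P y.1 y.2), ← hg]
      apply Finset.sum_congr rfl
      intro x _
      simp [x.2]

lemma key_lemma (k : ℕ) (hk : 2 ≤ k) (Fq : Type*) [Field Fq]
    (P : ℕ → Fin 2 → Fin (2 * k) → Fq)
    (hRS : ∀ C : Finset (ℕ × Fin 2), C ⊆ Finset.Icc 1 (k + 2) ×ˢ Finset.univ →
      C.card = 2 * k → Decodable P C)
    (γ : ℕ → Fin 2 → Fq)
    (P' : Fin 2 → Fin (2 * k) → Fq)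
    (hP' : ∀ j, P' j = ∑ i ∈ Finset.Icc 2 (k + 2), γ i j • P i 0)
    (hγ : ∀ i ∈ Finset.Icc 2 (k + 2), ∀ j ∈ Finset.Icc 2 (k + 2), i ≠ j →
      γ i 0 * γ j 1 ≠ γ i 1 * γ j 0)
    (S : Finset ℕ) (hS : S ⊆ Finset.Icc 2 (k + 2)) (hcard : S.card = k - 1) :
    Decodable (fun i j => if i = 1 then P' j else P i j)
        (insert (1 : ℕ) S ×ˢ Finset.univ) := by
  have h1S : (1 : ℕ) ∉ S := by
    intro h
    have := hS h
    simp [Finset.mem_Icc] at this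
  have hne1 : ∀ s ∈ S, s ≠ 1 := by
    intro s hs
    have := hS hs
    simp [Finset.mem_Icc] at this
    omega
  rw [decodable_iff]
  intro g hg
  set a := g (1, 0) with ha_def
  set b := g (1, 1) with hb_def
  -- the big set of original chunks
  set C' : Finset (ℕ × Fin 2) :=
    (Finset.Icc 2 (k + 2)) ×ˢ {(0 : Fin 2)} ∪ S ×ˢ {(1 : Fin 2)} with hC'
  have hdisj : Disjoint ((Finset.Icc 2 (k + 2)) ×ˢ ({(0 : Fin 2)} : Finset (Fin 2)))
      (S ×ˢ ({(1 : Fin 2)} : Finset (Fin 2))) := by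
    rw [Finset.disjoint_left]
    rintro ⟨i, j⟩ h1 h2
    simp only [Finset.mem_product, Finset.mem_singleton] at h1 h2
    rw [h1.2] at h2
    exact absurd h2.2 (by decide)
  have hsub : C' ⊆ Finset.Icc 1 (k + 2) ×ˢ Finset.univ := by
    rintro ⟨i, j⟩ hy
    simp only [hC', Finset.mem_union, Finset.mem_product, Finset.mem_Icc,
      Finset.mem_singleton] at hy
    simp only [Finset.mem_product, Finset.mem_Icc, Finset.mem_univ, and_true]
    rcases hy with h | h
    · omega
    · have := hS h.1
      simp [Finset.mem_Icc] at this
      omega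
  have hcard' : C'.card = 2 * k := by
    rw [hC', Finset.card_union_of_disjoint hdisj, Finset.card_product,
      Finset.card_product, Finset.card_singleton, Finset.card_singleton,
      Nat.card_Icc, hcard]
    omega
  -- define the coefficients on C'
  set G : ℕ × Fin 2 → Fq := fun y =>
    if y.2 = 0 then a * γ y.1 0 + b * γ y.1 1 + (if y.1 ∈ S then g (y.1, 0) else 0)
    else g (y.1, 1) with hG
  -- compute the sum over C'
  have hsum : ∑ y ∈ C', G y • P y.1 y.2 = 0 := by
    rw [hC', Finset.sum_union hdisj]
    rw [Finset.sum_product, Finset.sum_product]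
    simp only [Finset.sum_singleton, hG]
    simp only [show ((0 : Fin 2) = 0) = True by simp, if_true,
      show ((1 : Fin 2) = 0) = False by simp, if_false]
    rw [← hg]
    rw [Finset.sum_product, Finset.sum_insert h1S]
    simp only [Fin.sum_univ_two, if_pos rfl]
    have expand : ∀ i ∈ Finset.Icc 2 (k + 2),
        (a * γ i 0 + b * γ i 1 + (if i ∈ S then g (i, 0) else 0)) • P i 0
        = a • (γ i 0 • P i 0) + b • (γ i 1 • P i 0)
          + (if i ∈ S then g (i, 0) • P i 0 else 0) := by
      intro i _
      rw [add_smul, add_smul, smul_smul, smul_smul, ite_smul, zero_smul]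
    rw [Finset.sum_congr rfl expand]
    rw [Finset.sum_add_distrib, Finset.sum_add_distrib]
    rw [← Finset.smul_sum, ← Finset.smul_sum, ← hP' 0, ← hP' 1]
    rw [Finset.sum_ite_mem, Finset.inter_eq_right.mpr hS]
    have hrest : ∀ s ∈ S, (if s = 1 then P' 0 else P s 0) = P s 0 ∧
        (if s = 1 then P' 1 else P s 1) = P s 1 := by
      intro s hs
      rw [if_neg (hne1 s hs), if_neg (hne1 s hs)]
      exact ⟨rfl, rfl⟩
    have : ∑ s ∈ S, (g (s, 0) • (if s = 1 then P' 0 else P s 0)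
          + g (s, 1) • (if s = 1 then P' 1 else P s 1))
        = ∑ s ∈ S, g (s, 0) • P s 0 + ∑ s ∈ S, g (s, 1) • P s 1 := by
      rw [← Finset.sum_add_distrib]
      refine Finset.sum_congr rfl fun s hs => ?_
      rw [(hrest s hs).1, (hrest s hs).2]
    rw [this]
    simp only [if_true]
    abel
  have hdec := (decodable_iff P C').mp (hRS C' hsub hcard') G hsum
  -- the complement of S inside Icc 2 (k+2) has two elements
  have hTcard : (Finset.Icc 2 (k + 2) \ S).card = 2 := by
    rw [Finset.card_sdiff_of_subset hS, Nat.card_Icc, hcard]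
    omega
  obtain ⟨u, hu, v, hv, huv⟩ := Finset.one_lt_card.mp (by omega : 1 < (Finset.Icc 2 (k + 2) \ S).card)
  have hu' := Finset.mem_sdiff.mp hu
  have hv' := Finset.mem_sdiff.mp hv
  have hequ : a * γ u 0 + b * γ u 1 = 0 := by
    have := hdec (u, 0) (Finset.mem_union_left _
      (Finset.mem_product.mpr ⟨hu'.1, Finset.mem_singleton_self _⟩))
    simpa [hG, hu'.2] using this
  have heqv : a * γ v 0 + b * γ v 1 = 0 := by
    have := hdec (v, 0) (Finset.mem_union_left _
      (Finset.mem_product.mpr ⟨hv'.1, Finset.mem_singleton_self _⟩))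
    simpa [hG, hv'.2] using this
  have hd : γ u 0 * γ v 1 - γ u 1 * γ v 0 ≠ 0 :=
    sub_ne_zero.mpr (hγ u hu'.1 v hv'.1 huv)
  have ha : a = 0 := by
    have h1 : a * (γ u 0 * γ v 1 - γ u 1 * γ v 0) = 0 := by
      linear_combination γ v 1 * hequ - γ u 1 * heqv
    exact (mul_eq_zero.mp h1).resolve_right hd
  have hb : b = 0 := by
    have h1 : b * (γ u 0 * γ v 1 - γ u 1 * γ v 0) = 0 := by
      linear_combination γ u 0 * heqv - γ v 0 * hequ
    exact (mul_eq_zero.mp h1).resolve_right hd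
  have hs0 : ∀ s ∈ S, g (s, 0) = 0 := by
    intro s hs
    have := hdec (s, 0) (Finset.mem_union_left _
      (Finset.mem_product.mpr ⟨hS hs, Finset.mem_singleton_self _⟩))
    simp only [hG, if_pos rfl, if_pos hs] at this
    rw [ha, hb] at this
    simpa using this
  have hs1 : ∀ s ∈ S, g (s, 1) = 0 := by
    intro s hs
    have := hdec (s, 1) (Finset.mem_union_right _
      (Finset.mem_product.mpr ⟨hs, Finset.mem_singleton_self _⟩))
    simpa [hG] using this
  rintro ⟨i, j⟩ hy
  simp only [Finset.mem_product, Finset.mem_insert] at hy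
  rcases hy.1 with h1 | hiS
  · subst h1
    fin_cases j
    · exact ha
    · exact hb
  · fin_cases j
    · exact hs0 i hiS
    · exact hs1 i hiS

/-- Appendix: the repaired configuration satisfies the MDS property:
with the initial Reed–Solomon property (any `2k` of the `2(k+2)` vectors `P_{i,j}`,
`1 ≤ i ≤ k+2`, are linearly independent), `P′_{1,j} = Σ_{i=2}^{k+2} γ_{i,j} P_{i,1}`,
and `γ_{i,1}γ_{j,2} ≠ γ_{i,2}γ_{j,1}` for all distinct `i, j ∈ {2,…,k+2}`, the
repaired configuration (node 1 storing `P′_{1,1}, P′_{1,2}`, node `i` storing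
`P_{i,1}, P_{i,2}` for `2 ≤ i ≤ k+2`) satisfies the MDS property: for every `k` of
the `k+2` nodes, the `2k` chunks stored on those nodes are linearly independent.
In particular, for every `(k-1)`-element `S ⊆ {2,…,k+2}`, the `2k` vectors
`{P′_{1,1}, P′_{1,2}} ∪ {P_{s,1}, P_{s,2} : s ∈ S}` are linearly independent. -/
theorem stmt8 (k : ℕ) (hk : 2 ≤ k) (Fq : Type*) [Field Fq]
    (P : ℕ → Fin 2 → Fin (2 * k) → Fq)
    (hRS : ∀ C : Finset (ℕ × Fin 2), C ⊆ Finset.Icc 1 (k + 2) ×ˢ Finset.univ →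
      C.card = 2 * k → Decodable P C)
    (γ : ℕ → Fin 2 → Fq)
    (P' : Fin 2 → Fin (2 * k) → Fq)
    (hP' : ∀ j, P' j = ∑ i ∈ Finset.Icc 2 (k + 2), γ i j • P i 0)
    (hγ : ∀ i ∈ Finset.Icc 2 (k + 2), ∀ j ∈ Finset.Icc 2 (k + 2), i ≠ j →
      γ i 0 * γ j 1 ≠ γ i 1 * γ j 0) :
    (∀ S : Finset ℕ, S ⊆ Finset.Icc 1 (k + 2) → S.card = k →
      Decodable (fun i j => if i = 1 then P' j else P i j) (S ×ˢ Finset.univ)) ∧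
    (∀ S : Finset ℕ, S ⊆ Finset.Icc 2 (k + 2) → S.card = k - 1 →
      Decodable (fun i j => if i = 1 then P' j else P i j)
        (insert (1 : ℕ) S ×ˢ Finset.univ)) := by
  have hkey := key_lemma k hk Fq P hRS γ P' hP' hγ
  refine ⟨?_, hkey⟩
  intro S hS hcard
  by_cases h1 : (1 : ℕ) ∈ S
  · have hrw : S = insert 1 (S.erase 1) := (Finset.insert_erase h1).symm
    have hsub : S.erase 1 ⊆ Finset.Icc 2 (k + 2) := by
      intro i hi
      have hi1 : i ≠ 1 := Finset.ne_of_mem_erase hi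
      have := hS (Finset.mem_of_mem_erase hi)
      simp only [Finset.mem_Icc] at this ⊢
      omega
    have hc : (S.erase 1).card = k - 1 := by
      rw [Finset.card_erase_of_mem h1, hcard]
    rw [hrw]
    exact hkey _ hsub hc
  · have heq : (fun x : {y // y ∈ S ×ˢ (Finset.univ : Finset (Fin 2))} =>
        (fun i (j : Fin 2) => if i = 1 then P' j else P i j) x.1.1 x.1.2)
        = fun x => P x.1.1 x.1.2 := by
      funext x
      have hx := Finset.mem_product.mp x.2
      refine if_neg (fun h => h1 ?_)
      rw [← h]
      exact hx.1
    rw [Decodable, heq]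
    refine hRS _ ?_ ?_
    · exact Finset.product_subset_product_left hS
    · rw [Finset.card_product, hcard]
      simp [mul_comm]
end

section
/- (Appendix, Case 2: decodability of R_2) Let k ≥ 2, F_q a finite field, W = F_q^{2k}, and let P_{i,j} ∈ W (i ∈ {1,…,k+2}, j ∈ {1,2}) satisfy the initial Reed–Solomon property that any 2k of them are linearly independent. Let λ^{(k+2)}_{i,j} ∈ F_q be the unique coefficients with P_{k+2,1} = Σ_{i=2}^{k+1} Σ_{j=1}^{2} λ^{(k+2)}_{i,j} P_{i,j}. Let γ_{i,j} ∈ F_q for i ∈ {2,…,k+2}, j ∈ {1,2}, and set P′_{1,j} = Σ_{i=2}^{k+2} γ_{i,j} P_{i,1} for j = 1, 2. If (γ_{k,1} + γ_{k+2,1}λ^{(k+2)}_{k,1})(γ_{k+1,2} + γ_{k+2,2}λ^{(k+2)}_{k+1,1}) ≠ (γ_{k+1,1} + γ_{k+2,1}λ^{(k+2)}_{k+1,1})(γ_{k,2} + γ_{k+2,2}λ^{(k+2)}_{k,1}), then the 2k vectors {P′_{1,1}, P′_{1,2}} ∪ {P_{i,1}, P_{i,2} : 2 ≤ i ≤ k−1}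 ∪ {P_{k,2}, P_{k+1,2}} are linearly independent. -/
/-- Appendix, Case 2: decodability of `R₂`: with the initial
Reed–Solomon property, coefficients `λ^{(k+2)}_{i,j}` expressing
`P_{k+2,1} = Σ_{i=2}^{k+1} Σ_{j=1}^{2} λ^{(k+2)}_{i,j} P_{i,j}`, and
`P′_{1,j} = Σ_{i=2}^{k+2} γ_{i,j} P_{i,1}` for `j = 1, 2`, if
`(γ_{k,1} + γ_{k+2,1}λ^{(k+2)}_{k,1})(γ_{k+1,2} + γ_{k+2,2}λ^{(k+2)}_{k+1,1}) ≠
 (γ_{k+1,1} + γ_{k+2,1}λ^{(k+2)}_{k+1,1})(γ_{k,2} + γ_{k+2,2}λ^{(k+2)}_{k,1})`,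
then the `2k` vectors
`{P′_{1,1}, P′_{1,2}} ∪ {P_{i,1}, P_{i,2} : 2 ≤ i ≤ k-1} ∪ {P_{k,2}, P_{k+1,2}}`
are linearly independent. -/
theorem stmt10 (k : ℕ) (hk : 2 ≤ k) (Fq : Type*) [Field Fq]
    (P : ℕ → Fin 2 → Fin (2 * k) → Fq)
    (hRS : ∀ C : Finset (ℕ × Fin 2), C ⊆ Finset.Icc 1 (k + 2) ×ˢ Finset.univ →
      C.card = 2 * k → Decodable P C)
    (lam : ℕ → Fin 2 → Fq)
    (hlam : P (k + 2) 0 = ∑ i ∈ Finset.Icc 2 (k + 1), ∑ j : Fin 2, lam i j • P i j)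
    (γ : ℕ → Fin 2 → Fq)
    (P' : Fin 2 → Fin (2 * k) → Fq)
    (hP' : ∀ j, P' j = ∑ i ∈ Finset.Icc 2 (k + 2), γ i j • P i 0)
    (hγ : (γ k 0 + γ (k + 2) 0 * lam k 0) * (γ (k + 1) 1 + γ (k + 2) 1 * lam (k + 1) 0) ≠
      (γ (k + 1) 0 + γ (k + 2) 0 * lam (k + 1) 0) * (γ k 1 + γ (k + 2) 1 * lam k 0)) :
    Decodable (fun i j => if i = 1 then P' j else P i j)
      (({1} : Finset ℕ) ×ˢ Finset.univ ∪ (Finset.Icc 2 (k - 1) ×ˢ Finset.univ) ∪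
        {((k : ℕ), (1 : Fin 2)), ((k + 1 : ℕ), (1 : Fin 2))}) := by
  classical
  -- The basis family: P_{i,j} for i ∈ [2, k+1]
  have hsplit : Finset.Icc 2 (k+2) = insert (k+2) (Finset.Icc 2 (k+1)) := by
    ext x; simp [Finset.mem_Icc]; omega
  have hsub : (Finset.Icc 2 (k+1) ×ˢ (Finset.univ : Finset (Fin 2))) ⊆
      Finset.Icc 1 (k+2) ×ˢ Finset.univ := by
    apply Finset.product_subset_product_left
    intro x hx
    simp only [Finset.mem_Icc] at hx ⊢
    omega
  have hcard : (Finset.Icc 2 (k+1) ×ˢ (Finset.univ : Finset (Fin 2))).card = 2 * k := by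
    rw [Finset.card_product, Nat.card_Icc]
    simp only [Fintype.card_fin, Finset.card_univ]
    omega
  have hindep := hRS _ hsub hcard
  rw [Decodable, Fintype.linearIndependent_iff] at hindep
  rw [Decodable, Fintype.linearIndependent_iff]
  set C : Finset (ℕ × Fin 2) :=
    ({1} : Finset ℕ) ×ˢ Finset.univ ∪ (Finset.Icc 2 (k - 1) ×ˢ Finset.univ) ∪
        {((k : ℕ), (1 : Fin 2)), ((k + 1 : ℕ), (1 : Fin 2))} with hCdef
  have hmemC : ∀ x : ℕ × Fin 2, x ∈ C ↔
      (x.1 = 1 ∨ (2 ≤ x.1 ∧ x.1 ≤ k - 1) ∨ (x.1 = k ∧ x.2 = 1) ∨ (x.1 = k+1 ∧ x.2 = 1)) := by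
    intro x
    simp only [hCdef, Finset.mem_union, Finset.mem_product, Finset.mem_singleton,
      Finset.mem_univ, and_true, Finset.mem_Icc, Finset.mem_insert, Prod.ext_iff]
    constructor
    · rintro ((h | h) | (h | h)) <;> tauto
    · rintro (h | h | h | h) <;> tauto
  intro c hc
  set c' : ℕ × Fin 2 → Fq := fun x => if h : x ∈ C then c ⟨x, h⟩ else 0 with hc'def
  have hu : ∀ x : {x // x ∈ C}, c x = c' x.1 := by
    intro x
    rw [hc'def]
    simp only [x.2, dif_pos]
  -- coefficients of P' j in the basis family
  set A : Fin 2 → ℕ × Fin 2 → Fq := fun j y =>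
    if y.2 = 0 then γ y.1 j + γ (k+2) j * lam y.1 0 else γ (k+2) j * lam y.1 1 with hAdef
  have hPA : ∀ j : Fin 2, P' j =
      ∑ y ∈ Finset.Icc 2 (k+1) ×ˢ (Finset.univ : Finset (Fin 2)), A j y • P y.1 y.2 := by
    intro j
    rw [hP', hsplit, Finset.sum_insert (by simp), hlam, Finset.smul_sum,
      ← Finset.sum_add_distrib, Finset.sum_product]
    refine Finset.sum_congr rfl fun i hi => ?_
    rw [Fin.sum_univ_two, Fin.sum_univ_two]
    simp only [hAdef]
    norm_num
    module
  -- the hypothesis as a sum over the finset C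
  have hhc : ∑ x ∈ C, (c' x • if x.1 = 1 then P' x.2 else P x.1 x.2) = 0 := by
    rw [← Finset.sum_coe_sort C (fun x => c' x • if x.1 = 1 then P' x.2 else P x.1 x.2)]
    rw [← hc]
    exact Finset.sum_congr rfl fun x _ => by rw [hu x]
  -- split hhc
  have hd1 : Disjoint (({1} : Finset ℕ) ×ˢ (Finset.univ : Finset (Fin 2)))
      (Finset.Icc 2 (k-1) ×ˢ (Finset.univ : Finset (Fin 2))) := by
    rw [Finset.disjoint_left]
    intro x hx hx'
    simp only [Finset.mem_product, Finset.mem_singleton, Finset.mem_Icc] at hx hx'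
    omega
  have hd2 : Disjoint (({1} : Finset ℕ) ×ˢ (Finset.univ : Finset (Fin 2)) ∪
      Finset.Icc 2 (k-1) ×ˢ (Finset.univ : Finset (Fin 2)))
      ({((k : ℕ), (1 : Fin 2)), ((k + 1 : ℕ), (1 : Fin 2))} : Finset (ℕ × Fin 2)) := by
    rw [Finset.disjoint_right]
    intro x hx hx'
    simp only [Finset.mem_insert, Finset.mem_singleton] at hx
    simp only [Finset.mem_union, Finset.mem_product, Finset.mem_singleton, Finset.mem_Icc] at hx'
    rcases hx with h | h <;> subst h <;> simp at hx' <;> omega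
  have hne : ((k : ℕ), (1 : Fin 2)) ≠ ((k + 1 : ℕ), (1 : Fin 2)) := by simp
  rw [hCdef, Finset.sum_union hd2, Finset.sum_union hd1, Finset.sum_pair hne] at hhc
  have h1sum : ∑ x ∈ (({1} : Finset ℕ) ×ˢ (Finset.univ : Finset (Fin 2))),
      (c' x • if x.1 = 1 then P' x.2 else P x.1 x.2)
      = c' (1,0) • P' 0 + c' (1,1) • P' 1 := by
    rw [Finset.sum_product, Finset.sum_singleton, Fin.sum_univ_two]
    simp
  rw [h1sum] at hhc
  -- the key vector identity over the basis index set
  set g : ℕ × Fin 2 → Fq := fun y => c' (1,0) * A 0 y + c' (1,1) * A 1 y + c' y with hgdef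
  have hC'sub : (Finset.Icc 2 (k-1) ×ˢ (Finset.univ : Finset (Fin 2))) ∪
      ({((k : ℕ), (1 : Fin 2)), ((k + 1 : ℕ), (1 : Fin 2))} : Finset (ℕ × Fin 2)) ⊆
      Finset.Icc 2 (k+1) ×ˢ (Finset.univ : Finset (Fin 2)) := by
    intro x hx
    simp only [Finset.mem_union, Finset.mem_product, Finset.mem_Icc, Finset.mem_insert,
      Finset.mem_singleton, Finset.mem_univ, and_true] at hx ⊢
    rcases hx with ⟨h1, h2⟩ | (h | h)
    · omega
    · subst h; omega
    · subst h; omega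
  have hcbig : ∑ y ∈ Finset.Icc 2 (k+1) ×ˢ (Finset.univ : Finset (Fin 2)), c' y • P y.1 y.2
      = ∑ y ∈ (Finset.Icc 2 (k-1) ×ˢ (Finset.univ : Finset (Fin 2))) ∪
          ({((k : ℕ), (1 : Fin 2)), ((k + 1 : ℕ), (1 : Fin 2))} : Finset (ℕ × Fin 2)),
          c' y • P y.1 y.2 := by
    refine (Finset.sum_subset hC'sub fun y hy hy' => ?_).symm
    have hyC : y ∉ C := by
      obtain ⟨a, b⟩ := y
      simp only [Finset.mem_product, Finset.mem_Icc, Finset.mem_univ, and_true] at hy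
      simp only [Finset.mem_union, Finset.mem_product, Finset.mem_Icc, Finset.mem_insert,
        Finset.mem_singleton, Finset.mem_univ, and_true, not_or, Prod.mk.injEq, not_and] at hy'
      rw [hmemC]
      dsimp only
      rintro (h | h | ⟨h1, h2⟩ | ⟨h1, h2⟩)
      · omega
      · exact hy'.1 h.1 h.2
      · exact hy'.2.1 h1 h2
      · exact hy'.2.2 h1 h2
    rw [show c' y = 0 from dif_neg hyC, zero_smul]
  have key : ∑ y ∈ Finset.Icc 2 (k+1) ×ˢ (Finset.univ : Finset (Fin 2)), g y • P y.1 y.2 = 0 := by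
    simp only [hgdef, add_smul, mul_smul]
    rw [Finset.sum_add_distrib, Finset.sum_add_distrib, ← Finset.smul_sum, ← Finset.smul_sum,
      ← hPA 0, ← hPA 1, hcbig]
    rw [Finset.sum_union (hd2.mono_left Finset.subset_union_right), Finset.sum_pair hne]
    have e2 : ∑ y ∈ Finset.Icc 2 (k-1) ×ˢ (Finset.univ : Finset (Fin 2)), c' y • P y.1 y.2
        = ∑ y ∈ Finset.Icc 2 (k-1) ×ˢ (Finset.univ : Finset (Fin 2)),
          (c' y • if y.1 = 1 then P' y.2 else P y.1 y.2) := by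
      refine Finset.sum_congr rfl fun y hy => ?_
      simp only [Finset.mem_product, Finset.mem_Icc] at hy
      rw [if_neg (by omega)]
    rw [e2, ← hhc]
    dsimp only
    rw [if_neg (show ¬(k : ℕ) = 1 by omega), if_neg (show ¬(k + 1 : ℕ) = 1 by omega)]
    abel
  -- all g-coefficients vanish
  have hgzero : ∀ y ∈ Finset.Icc 2 (k+1) ×ˢ (Finset.univ : Finset (Fin 2)), g y = 0 := by
    intro y hy
    refine hindep (fun z => g z.1) ?_ ⟨y, hy⟩
    rw [Finset.sum_coe_sort _ (fun y => g y • P y.1 y.2)]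
    exact key
  -- extract the 2×2 system
  have hmk0 : ((k : ℕ), (0 : Fin 2)) ∈ Finset.Icc 2 (k+1) ×ˢ (Finset.univ : Finset (Fin 2)) := by
    simp [Finset.mem_Icc]; omega
  have hmk10 : ((k+1 : ℕ), (0 : Fin 2)) ∈ Finset.Icc 2 (k+1) ×ˢ (Finset.univ : Finset (Fin 2)) := by
    simp [Finset.mem_Icc]; omega
  have hck0 : c' ((k : ℕ), (0 : Fin 2)) = 0 := by
    have hnot : ((k : ℕ), (0 : Fin 2)) ∉ C := by
      rw [hmemC]
      push_neg
      exact ⟨by omega, by omega, fun _ => by simp, fun h => absurd h (by omega)⟩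
    simp [hc'def, hnot]
  have hck10 : c' ((k+1 : ℕ), (0 : Fin 2)) = 0 := by
    have hnot : ((k+1 : ℕ), (0 : Fin 2)) ∉ C := by
      rw [hmemC]
      push_neg
      exact ⟨by omega, by omega, fun h => absurd h (by omega), fun _ => by simp⟩
    simp [hc'def, hnot]
  have e1 := hgzero _ hmk0
  have e2 := hgzero _ hmk10
  rw [hgdef] at e1 e2
  simp only [hAdef, if_pos rfl, hck0, hck10, add_zero] at e1 e2
  -- determinant nonzero
  have hdet : (γ k 0 + γ (k + 2) 0 * lam k 0) * (γ (k + 1) 1 + γ (k + 2) 1 * lam (k + 1) 0) -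
      (γ (k + 1) 0 + γ (k + 2) 0 * lam (k + 1) 0) * (γ k 1 + γ (k + 2) 1 * lam k 0) ≠ 0 :=
    sub_ne_zero_of_ne hγ
  have hu0 : c' (1, 0) = 0 := by
    have h := mul_eq_zero.mp (show c' (1,0) *
        ((γ k 0 + γ (k + 2) 0 * lam k 0) * (γ (k + 1) 1 + γ (k + 2) 1 * lam (k + 1) 0) -
        (γ (k + 1) 0 + γ (k + 2) 0 * lam (k + 1) 0) * (γ k 1 + γ (k + 2) 1 * lam k 0)) = 0 by
      linear_combination (γ (k + 1) 1 + γ (k + 2) 1 * lam (k + 1) 0) * e1 -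
        (γ k 1 + γ (k + 2) 1 * lam k 0) * e2)
    exact h.resolve_right hdet
  have hw0 : c' (1, 1) = 0 := by
    have h := mul_eq_zero.mp (show c' (1,1) *
        ((γ k 0 + γ (k + 2) 0 * lam k 0) * (γ (k + 1) 1 + γ (k + 2) 1 * lam (k + 1) 0) -
        (γ (k + 1) 0 + γ (k + 2) 0 * lam (k + 1) 0) * (γ k 1 + γ (k + 2) 1 * lam k 0)) = 0 by
      linear_combination (γ k 0 + γ (k + 2) 0 * lam k 0) * e2 -
        (γ (k + 1) 0 + γ (k + 2) 0 * lam (k + 1) 0) * e1)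
    exact h.resolve_right hdet
  have hw0' : c' 1 = 0 := hw0
  -- conclude
  intro x
  rw [hu x]
  rcases x with ⟨⟨i, j⟩, hx⟩
  rcases (hmemC (i, j)).mp hx with h | h | h | h
  · subst h
    fin_cases j
    · exact hu0
    · exact hw0
  · have hmem : ((i : ℕ), j) ∈ Finset.Icc 2 (k+1) ×ˢ (Finset.univ : Finset (Fin 2)) := by
      simp only [Finset.mem_product, Finset.mem_Icc, Finset.mem_univ, and_true]
      omega
    have := hgzero _ hmem
    rw [hgdef] at this
    simpa [hu0, hw0, hw0'] using this
  · obtain ⟨h1, h2⟩ := h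
    have hmem : ((i : ℕ), j) ∈ Finset.Icc 2 (k+1) ×ˢ (Finset.univ : Finset (Fin 2)) := by
      simp only [Finset.mem_product, Finset.mem_Icc, Finset.mem_univ, and_true]
      omega
    have := hgzero _ hmem
    rw [hgdef] at this
    simpa [hu0, hw0, hw0'] using this
  · obtain ⟨h1, h2⟩ := h
    have hmem : ((i : ℕ), j) ∈ Finset.Icc 2 (k+1) ×ˢ (Finset.univ : Finset (Fin 2)) := by
      simp only [Finset.mem_product, Finset.mem_Icc, Finset.mem_univ, and_true]
      omega
    have := hgzero _ hmem
    rw [hgdef] at this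
    simpa [hu0, hw0, hw0'] using this
end

section
/- (Appendix: the repaired configuration satisfies the erMDS property) Let k ≥ 2, n = k+2, F_q a finite field, and W = F_q^{2k}. Let P_{i,j} ∈ W (i ∈ {1,…,k+2}, j ∈ {1,2}) satisfy the initial Reed–Solomon property that any 2k of them are linearly independent. For each i′ ∈ {2,…,k+2}, let λ^{(i′)}_{i,j} ∈ F_q be the unique coefficients with P_{i′,1} = Σ_{i∈{2,…,k+2}∖{i′}} Σ_{j=1}^{2} λ^{(i′)}_{i,j} P_{i,j}. Let γ_{i,j} ∈ F_q (i ∈ {2,…,k+2}, j ∈ {1,2}) satisfy: (i) γ_{i,1}γ_{j,2} ≠ γ_{i,2}γ_{j,1} for all distinct i, j; (ii) γ_{i,2} + γ_{i′,2}λ^{(i′)}_{i,1} ≠ 0 for all distinct i, i′; (iii) (γ_{i,1} + γ_{i″,1}λ^{(i″)}_{i,1})(γ_{i′,2} + γ_{i″,2}λ^{(i″)}_{i′,1}) ≠ (γ_{i′,1} + γ_{i″,1}λ^{(i″)}_{i′,1})(γ_{i,2} + γ_{i″,2}λ^{(i″)}_{i,1}) for all pairwise distinct i, i′, i″. Define P′_{1,j}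 = Σ_{i=2}^{k+2} γ_{i,j} P_{i,1} for j = 1, 2 and form the repaired configuration. Then every RBC of the repaired configuration containing the k+1 chunks F_1 = {P′_{1,2}, P_{2,2}, …, P_{k+1,2}} is decodable; more generally, the repaired configuration satisfies the erMDS property: for the k+1 nodes {2,…,k+2} the selection {P_{2,1},…,P_{k+2,1}} works, and for node 1 together with any k-element subset S ⊆ {2,…,k+2} the selection {P′_{1,2}} ∪ {P_{s,2} : s ∈ S} works. -/
/-- A repair-based collection (RBC) over the `n = k+2` nodes `{1,…,k+2}`:
(Step 1) select `n-1` nodes (exclude node `a`); (Step 2) select `k-1` of them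
(the set `S`) and take both chunks of each; (Step 3) take one chunk `(i, g i)` from
each of the remaining two nodes. -/
def IsRBC (k : ℕ) (C : Finset (ℕ × Fin 2)) : Prop :=
  ∃ a ∈ Finset.Icc 1 (k + 2), ∃ S : Finset ℕ,
    S ⊆ Finset.Icc 1 (k + 2) \ {a} ∧ S.card = k - 1 ∧
    ∃ g : ℕ → Fin 2,
      C = S ×ˢ Finset.univ ∪
        (Finset.Icc 1 (k + 2) \ insert a S).image (fun i => (i, g i))

lemma twoByTwo {Fq : Type*} [Field Fq] {a b c d x y : Fq} (h : a * d ≠ c * b)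
    (h1 : a * x + b * y = 0) (h2 : c * x + d * y = 0) : x = 0 ∧ y = 0 := by
  have hx : (a * d - c * b) * x = 0 := by linear_combination d * h1 - b * h2
  have hy : (a * d - c * b) * y = 0 := by linear_combination a * h2 - c * h1
  have hne : a * d - c * b ≠ 0 := sub_ne_zero.mpr h
  exact ⟨(mul_eq_zero.mp hx).resolve_left hne, (mul_eq_zero.mp hy).resolve_left hne⟩

lemma core (k : ℕ) (hk : 2 ≤ k) {Fq : Type*} [Field Fq]
    (P : ℕ → Fin 2 → Fin (2 * k) → Fq)
    (hRS : ∀ C : Finset (ℕ × Fin 2), C ⊆ Finset.Icc 1 (k + 2) ×ˢ Finset.univ →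
      C.card = 2 * k → Decodable P C)
    (lam : ℕ → ℕ → Fin 2 → Fq)
    (hlam : ∀ i' ∈ Finset.Icc 2 (k + 2), P i' 0 =
      ∑ i ∈ Finset.Icc 2 (k + 2) \ {i'}, ∑ j : Fin 2, lam i' i j • P i j)
    (γ : ℕ → Fin 2 → Fq)
    (hγ2 : ∀ i ∈ Finset.Icc 2 (k + 2), ∀ i' ∈ Finset.Icc 2 (k + 2), i ≠ i' →
      γ i 1 + γ i' 1 * lam i' i 0 ≠ 0)
    (hγ3 : ∀ i ∈ Finset.Icc 2 (k + 2), ∀ i' ∈ Finset.Icc 2 (k + 2),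
      ∀ i'' ∈ Finset.Icc 2 (k + 2), i ≠ i' → i ≠ i'' → i' ≠ i'' →
      (γ i 0 + γ i'' 0 * lam i'' i 0) * (γ i' 1 + γ i'' 1 * lam i'' i' 0) ≠
      (γ i' 0 + γ i'' 0 * lam i'' i' 0) * (γ i 1 + γ i'' 1 * lam i'' i 0))
    (P' : Fin 2 → Fin (2 * k) → Fq)
    (hP' : ∀ j, P' j = ∑ i ∈ Finset.Icc 2 (k + 2), γ i j • P i 0)
    (Q : ℕ → Fin 2 → Fin (2 * k) → Fq)
    (hQ : Q = fun i j => if i = 1 then P' j else P i j)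
    (S : Finset ℕ) (hS : S ⊆ Finset.Icc 2 (k + 2)) (hScard : S.card = k)
    (d : ℕ) (hd : d ∈ Finset.Icc 2 (k + 2)) (hdS : d ∉ S)
    (C : Finset (ℕ × Fin 2)) (hC : ∀ x ∈ C, x.1 = 1 ∨ x.1 ∈ S)
    (H : (((1:ℕ), (0:Fin 2)) ∉ C ∧ ((1:ℕ), (1:Fin 2)) ∉ C) ∨
         (((1:ℕ), (0:Fin 2)) ∉ C ∧ ∃ e ∈ S, ((e:ℕ), (0:Fin 2)) ∉ C) ∨
         (∃ b ∈ S, ∃ e ∈ S, b ≠ e ∧ ((b:ℕ), (0:Fin 2)) ∉ C ∧ ((e:ℕ), (0:Fin 2)) ∉ C)) :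
    Decodable Q C := by
  classical
  have h1S : (1:ℕ) ∉ S := fun h => by
    have := hS h; simp [Finset.mem_Icc] at this
  have hSd : Finset.Icc 2 (k + 2) \ {d} = S := by
    apply (Finset.eq_of_subset_of_card_le _ _).symm
    · intro s hs
      simp only [Finset.mem_sdiff, Finset.mem_singleton]
      exact ⟨hS hs, fun h => hdS (h ▸ hs)⟩
    · rw [Finset.card_sdiff_of_subset (Finset.singleton_subset_iff.mpr hd), hScard]
      simp [Nat.card_Icc]
  have hIcc : Finset.Icc 2 (k + 2) = insert d S := by
    rw [← hSd, Finset.sdiff_singleton_eq_erase, Finset.insert_erase hd]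
  set κ : Fin 2 → ℕ → Fin 2 → Fq := fun t i j =>
    if j = 0 then γ i t + γ d t * lam d i 0 else γ d t * lam d i 1 with hκ
  have hκ0 : ∀ t i, κ t i 0 = γ i t + γ d t * lam d i 0 := by intro t i; simp [hκ]
  have hκ1 : ∀ t i, κ t i 1 = γ d t * lam d i 1 := by intro t i; simp [hκ]
  have hPd : P d 0 = ∑ i ∈ S, ∑ j : Fin 2, lam d i j • P i j := by
    rw [hlam d hd, hSd]
  have hP'exp : ∀ t, P' t = ∑ i ∈ S, ∑ j : Fin 2, κ t i j • P i j := by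
    intro t
    rw [hP' t, hIcc, Finset.sum_insert hdS, hPd, Finset.smul_sum]
    rw [← Finset.sum_add_distrib]
    refine Finset.sum_congr rfl fun i _ => ?_
    rw [Fin.sum_univ_two, Fin.sum_univ_two, hκ0, hκ1]
    module
  set B : Finset (ℕ × Fin 2) := S ×ˢ Finset.univ with hB
  have hBsub : B ⊆ Finset.Icc 1 (k + 2) ×ˢ Finset.univ := by
    intro x hx
    rw [Finset.mem_product] at hx ⊢
    refine ⟨?_, Finset.mem_univ _⟩
    have := hS hx.1; simp [Finset.mem_Icc] at this ⊢; omega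
  have hBcard : B.card = 2 * k := by
    rw [hB, Finset.card_product, hScard]; simp [mul_comm]
  have hBli := hRS B hBsub hBcard
  rw [Decodable, Fintype.linearIndependent_iff] at hBli
  rw [Decodable, Fintype.linearIndependent_iff]
  intro f hf
  set c : ℕ × Fin 2 → Fq := fun x => if h : x ∈ C then f ⟨x, h⟩ else 0 with hcdef
  have hcC : ∀ (x) (hx : x ∈ C), c x = f ⟨x, hx⟩ := fun x hx => dif_pos hx
  have hcN : ∀ x, x ∉ C → c x = 0 := fun x hx => dif_neg hx
  have hsum : ∑ x ∈ C, c x • Q x.1 x.2 = 0 := by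
    rw [← hf, ← Finset.sum_coe_sort C (fun x => c x • Q x.1 x.2)]
    exact Finset.sum_congr rfl fun x _ => by rw [hcC x.1 x.2]
  have hQ1 : ∀ t : Fin 2, Q 1 t = P' t := fun t => by simp [hQ]
  have hQn : ∀ i, i ≠ 1 → ∀ t, Q i t = P i t := fun i hi t => by simp [hQ, hi]
  have hA : ∑ x ∈ C.filter (fun x => x.1 = 1), c x • Q x.1 x.2
      = ∑ t : Fin 2, c (1, t) • P' t := by
    have step1 : ∑ x ∈ C.filter (fun x => x.1 = 1), c x • Q x.1 x.2
        = ∑ x ∈ C.filter (fun x => x.1 = 1), c x • P' x.2 :=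
      Finset.sum_congr rfl fun x hx => by
        rw [Finset.mem_filter] at hx
        rw [hx.2, hQ1]
    have hsub1 : C.filter (fun x => x.1 = 1) ⊆ ({1} : Finset ℕ) ×ˢ Finset.univ := by
      intro x hx
      rw [Finset.mem_filter] at hx
      rw [Finset.mem_product, Finset.mem_singleton]
      exact ⟨hx.2, Finset.mem_univ _⟩
    have hz1 : ∀ x ∈ ({1} : Finset ℕ) ×ˢ (Finset.univ : Finset (Fin 2)),
        x ∉ C.filter (fun x => x.1 = 1) → c x • P' x.2 = 0 := by
      intro x hx hx'
      have : x ∉ C := fun hxC => by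
        rw [Finset.mem_product, Finset.mem_singleton] at hx
        exact hx' (Finset.mem_filter.mpr ⟨hxC, hx.1⟩)
      rw [hcN x this, zero_smul]
    rw [step1, Finset.sum_subset hsub1 hz1, Finset.sum_product, Finset.sum_singleton]
  have hBeq : ∑ x ∈ C.filter (fun x => ¬ x.1 = 1), c x • Q x.1 x.2
      = ∑ x ∈ B, c x • P x.1 x.2 := by
    have step1 : ∑ x ∈ C.filter (fun x => ¬ x.1 = 1), c x • Q x.1 x.2
        = ∑ x ∈ C.filter (fun x => ¬ x.1 = 1), c x • P x.1 x.2 :=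
      Finset.sum_congr rfl fun x hx => by
        rw [Finset.mem_filter] at hx
        rw [hQn x.1 hx.2]
    have hsub2 : C.filter (fun x => ¬ x.1 = 1) ⊆ B := by
      intro x hx
      rw [Finset.mem_filter] at hx
      rw [hB, Finset.mem_product]
      rcases hC x hx.1 with h | h
      · exact absurd h hx.2
      · exact ⟨h, Finset.mem_univ _⟩
    have hz2 : ∀ x ∈ B, x ∉ C.filter (fun x => ¬ x.1 = 1) → c x • P x.1 x.2 = 0 := by
      intro x hx hx'
      have : x ∉ C := fun hxC => by
        rcases hC x hxC with h | h
        · rw [hB, Finset.mem_product] at hx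
          exact h1S (h ▸ hx.1)
        · have h1 : ¬ (x.1 = 1) := fun he => h1S (he ▸ h)
          exact hx' (Finset.mem_filter.mpr ⟨hxC, h1⟩)
      rw [hcN x this, zero_smul]
    rw [step1]
    exact Finset.sum_subset hsub2 hz2
  have hsplit : (∑ t : Fin 2, c (1, t) • P' t) + ∑ x ∈ B, c x • P x.1 x.2 = 0 := by
    rw [← hA, ← hBeq, Finset.sum_filter_add_sum_filter_not]
    exact hsum
  -- the coefficient function on the basis B
  set F : ℕ × Fin 2 → Fq := fun x =>
    c x + c (1, 0) * κ 0 x.1 x.2 + c (1, 1) * κ 1 x.1 x.2 with hF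
  have hP'B : ∀ t, P' t = ∑ x ∈ B, κ t x.1 x.2 • P x.1 x.2 := by
    intro t
    rw [hP'exp t, hB, Finset.sum_product]
  have key0 : ∑ x ∈ B, F x • P x.1 x.2 = 0 := by
    have e1 : ∑ x ∈ B, F x • P x.1 x.2 =
        (∑ t : Fin 2, c (1, t) • P' t) + ∑ x ∈ B, c x • P x.1 x.2 := by
      rw [Fin.sum_univ_two, hP'B 0, hP'B 1, Finset.smul_sum, Finset.smul_sum]
      rw [← Finset.sum_add_distrib, ← Finset.sum_add_distrib]
      refine Finset.sum_congr rfl fun x _ => ?_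
      rw [hF]
      simp only
      module
    rw [e1, hsplit]
  have key : ∀ x ∈ B, F x = 0 := by
    intro x hx
    have := hBli (fun y => F y.1) ?_ ⟨x, hx⟩
    · exact this
    · rw [← key0, ← Finset.sum_coe_sort B (fun x => F x • P x.1 x.2)]
  have hc1 : c (1, 0) = 0 ∧ c (1, 1) = 0 := by
    rcases H with ⟨h0, h1⟩ | ⟨h0, e, he, he0⟩ | ⟨b, hb, e, he, hbe, hb0, he0⟩
    · exact ⟨hcN _ h0, hcN _ h1⟩
    · have hc0 : c (1, 0) = 0 := hcN _ h0
      have hke := key (e, 0) (by rw [hB, Finset.mem_product]; exact ⟨he, Finset.mem_univ _⟩)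
      rw [hF] at hke
      simp only at hke
      rw [hcN _ he0, hc0, hκ0, hκ0] at hke
      have hne : γ e 1 + γ d 1 * lam d e 0 ≠ 0 :=
        hγ2 e (hS he) d hd (fun h => hdS (h ▸ he))
      have : c (1, 1) * (γ e 1 + γ d 1 * lam d e 0) = 0 := by linear_combination hke
      exact ⟨hc0, (mul_eq_zero.mp this).resolve_right hne⟩
    · have hkb := key (b, 0) (by rw [hB, Finset.mem_product]; exact ⟨hb, Finset.mem_univ _⟩)
      have hke := key (e, 0) (by rw [hB, Finset.mem_product]; exact ⟨he, Finset.mem_univ _⟩)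
      rw [hF] at hkb hke
      simp only at hkb hke
      rw [hcN _ hb0, hκ0, hκ0, zero_add] at hkb
      rw [hcN _ he0, hκ0, hκ0, zero_add] at hke
      have hdet := hγ3 b (hS hb) e (hS he) d hd hbe (fun h => hdS (h ▸ hb)) (fun h => hdS (h ▸ he))
      have h1 : (γ b 0 + γ d 0 * lam d b 0) * c (1, 0) + (γ b 1 + γ d 1 * lam d b 0) * c (1, 1) = 0 := by
        linear_combination hkb
      have h2 : (γ e 0 + γ d 0 * lam d e 0) * c (1, 0) + (γ e 1 + γ d 1 * lam d e 0) * c (1, 1) = 0 := by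
        linear_combination hke
      exact twoByTwo hdet h1 h2
  intro x
  rw [← hcC x.1 x.2]
  rcases hC x.1 x.2 with h | h
  · obtain ⟨⟨i, j⟩, hx⟩ := x
    simp only at h
    subst h
    fin_cases j
    · exact hc1.1
    · exact hc1.2
  · have hxB : (x : ℕ × Fin 2) ∈ B := by
      rw [hB, Finset.mem_product]; exact ⟨h, Finset.mem_univ _⟩
    have := key x.1 hxB
    rw [hF] at this
    simp only at this
    rw [hc1.1, hc1.2, zero_mul, zero_mul, add_zero, add_zero] at this
    exact this


lemma rbc_nodes {k : ℕ} {C : Finset (ℕ × Fin 2)} {a : ℕ} {S₀ : Finset ℕ} {g : ℕ → Fin 2}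
    (hS₀ : S₀ ⊆ Finset.Icc 1 (k + 2) \ {a})
    (hCeq : C = S₀ ×ˢ Finset.univ ∪
      (Finset.Icc 1 (k + 2) \ insert a S₀).image (fun i => (i, g i))) :
    ∀ x ∈ C, x.1 ∈ Finset.Icc 1 (k + 2) ∧ x.1 ≠ a := by
  intro x hx
  rw [hCeq] at hx
  rcases Finset.mem_union.mp hx with h | h
  · have := hS₀ (Finset.mem_product.mp h).1
    rw [Finset.mem_sdiff, Finset.mem_singleton] at this
    exact this
  · obtain ⟨i, hi, hix⟩ := Finset.mem_image.mp h
    rw [Finset.mem_sdiff] at hi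
    have hx1 : x.1 = i := by rw [← hix]
    rw [hx1]
    exact ⟨hi.1, fun h' => hi.2 (h' ▸ Finset.mem_insert_self a S₀)⟩

/-- Appendix: the repaired configuration satisfies the erMDS
property: with the initial Reed–Solomon property, the coefficients
`λ^{(i′)}_{i,j}` (encoded as `lam i' i j`) expressing
`P_{i′,1} = Σ_{i ≠ i′} Σ_j λ^{(i′)}_{i,j} P_{i,j}`, coefficients `γ` satisfying the
conditions (i), (ii), (iii), and `P′_{1,j} = Σ_{i=2}^{k+2} γ_{i,j} P_{i,1}`, the
repaired configuration `Q` (node 1 storing `P′_{1,1}, P′_{1,2}`, node `i` storing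
`P_{i,1}, P_{i,2}` for `2 ≤ i ≤ k+2`) satisfies:
(1) every RBC containing the `k+1` chunks `F₁ = {P′_{1,2}, P_{2,2}, …, P_{k+1,2}}`
is decodable; and the erMDS property holds via the selections:
(2) for the `k+1` nodes `{2,…,k+2}`, every RBC containing `{P_{2,1},…,P_{k+2,1}}`
is decodable;
(3) for node 1 together with any `k`-element `S ⊆ {2,…,k+2}`, every RBC containing
`{P′_{1,2}} ∪ {P_{s,2} : s ∈ S}` is decodable. -/
theorem stmt12 (k : ℕ) (hk : 2 ≤ k) (Fq : Type*) [Field Fq]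
    (P : ℕ → Fin 2 → Fin (2 * k) → Fq)
    (hRS : ∀ C : Finset (ℕ × Fin 2), C ⊆ Finset.Icc 1 (k + 2) ×ˢ Finset.univ →
      C.card = 2 * k → Decodable P C)
    (lam : ℕ → ℕ → Fin 2 → Fq)
    (hlam : ∀ i' ∈ Finset.Icc 2 (k + 2), P i' 0 =
      ∑ i ∈ Finset.Icc 2 (k + 2) \ {i'}, ∑ j : Fin 2, lam i' i j • P i j)
    (γ : ℕ → Fin 2 → Fq)
    (hγ1 : ∀ i ∈ Finset.Icc 2 (k + 2), ∀ j ∈ Finset.Icc 2 (k + 2), i ≠ j →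
      γ i 0 * γ j 1 ≠ γ i 1 * γ j 0)
    (hγ2 : ∀ i ∈ Finset.Icc 2 (k + 2), ∀ i' ∈ Finset.Icc 2 (k + 2), i ≠ i' →
      γ i 1 + γ i' 1 * lam i' i 0 ≠ 0)
    (hγ3 : ∀ i ∈ Finset.Icc 2 (k + 2), ∀ i' ∈ Finset.Icc 2 (k + 2),
      ∀ i'' ∈ Finset.Icc 2 (k + 2), i ≠ i' → i ≠ i'' → i' ≠ i'' →
      (γ i 0 + γ i'' 0 * lam i'' i 0) * (γ i' 1 + γ i'' 1 * lam i'' i' 0) ≠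
      (γ i' 0 + γ i'' 0 * lam i'' i' 0) * (γ i 1 + γ i'' 1 * lam i'' i 0))
    (P' : Fin 2 → Fin (2 * k) → Fq)
    (hP' : ∀ j, P' j = ∑ i ∈ Finset.Icc 2 (k + 2), γ i j • P i 0)
    (Q : ℕ → Fin 2 → Fin (2 * k) → Fq)
    (hQ : Q = fun i j => if i = 1 then P' j else P i j) :
    (∀ C : Finset (ℕ × Fin 2), IsRBC k C →
      ((1 : ℕ), (1 : Fin 2)) ∈ C →
      (∀ i ∈ Finset.Icc 2 (k + 1), ((i : ℕ), (1 : Fin 2)) ∈ C) →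
      Decodable Q C) ∧
    (∀ C : Finset (ℕ × Fin 2), IsRBC k C →
      (∀ i ∈ Finset.Icc 2 (k + 2), ((i : ℕ), (0 : Fin 2)) ∈ C) →
      Decodable Q C) ∧
    (∀ S : Finset ℕ, S ⊆ Finset.Icc 2 (k + 2) → S.card = k →
      ∀ C : Finset (ℕ × Fin 2), IsRBC k C →
        ((1 : ℕ), (1 : Fin 2)) ∈ C →
        (∀ s ∈ S, ((s : ℕ), (1 : Fin 2)) ∈ C) →
        Decodable Q C) := by
  classical
  have main3 : ∀ S : Finset ℕ, S ⊆ Finset.Icc 2 (k + 2) → S.card = k →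
      ∀ C : Finset (ℕ × Fin 2), IsRBC k C →
        ((1 : ℕ), (1 : Fin 2)) ∈ C →
        (∀ s ∈ S, ((s : ℕ), (1 : Fin 2)) ∈ C) →
        Decodable Q C := by
    intro Sg hSg hSgcard C hRBC h11 hmem
    obtain ⟨a, ha, S₀, hS₀, hS₀card, g, hCeq⟩ := hRBC
    have hnode := rbc_nodes hS₀ hCeq
    have ha1 : a ≠ 1 := fun h => (hnode _ h11).2 h.symm
    have haSg : a ∉ Sg := fun h => (hnode _ (hmem a h)).2 rfl
    have ha2 : a ∈ Finset.Icc 2 (k + 2) := by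
      rw [Finset.mem_Icc] at ha ⊢; omega
    have h1Sg : (1 : ℕ) ∉ Sg := fun h => by
      have := hSg h; rw [Finset.mem_Icc] at this; omega
    have hUn : Finset.Icc 1 (k + 2) \ {a} = insert 1 Sg := by
      apply (Finset.eq_of_subset_of_card_le _ _).symm
      · intro s hs
        rw [Finset.mem_insert] at hs
        rw [Finset.mem_sdiff, Finset.mem_singleton, Finset.mem_Icc]
        rcases hs with h | h
        · subst h; exact ⟨⟨le_refl 1, by omega⟩, fun h => ha1 h.symm⟩
        · have := hSg h; rw [Finset.mem_Icc] at this
          exact ⟨⟨by omega, this.2⟩, fun h' => haSg (h' ▸ h)⟩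
      · rw [Finset.card_sdiff_of_subset (Finset.singleton_subset_iff.mpr ha),
          Finset.card_insert_of_notMem h1Sg, hSgcard, Nat.card_Icc, Finset.card_singleton]
        omega
    have hC' : ∀ x ∈ C, x.1 = 1 ∨ x.1 ∈ Sg := by
      intro x hx
      have h := hnode x hx
      have : x.1 ∈ insert 1 Sg := by
        rw [← hUn, Finset.mem_sdiff, Finset.mem_singleton]; exact h
      exact Finset.mem_insert.mp this
    apply core k hk P hRS lam hlam γ hγ2 hγ3 P' hP' Q hQ Sg hSg hSgcard a ha2 haSg C hC'
    -- the two remaining nodes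
    set R : Finset ℕ := Finset.Icc 1 (k + 2) \ insert a S₀ with hRdef
    have haS₀ : a ∉ S₀ := fun h => by
      have := hS₀ h; rw [Finset.mem_sdiff, Finset.mem_singleton] at this; exact this.2 rfl
    have hins : insert a S₀ ⊆ Finset.Icc 1 (k + 2) :=
      Finset.insert_subset ha (hS₀.trans Finset.sdiff_subset)
    have hRcard : R.card = 2 := by
      rw [hRdef, Finset.card_sdiff_of_subset hins, Finset.card_insert_of_notMem haS₀, hS₀card,
        Nat.card_Icc]
      omega
    obtain ⟨b, e, hbe, hR⟩ := Finset.card_eq_two.mp hRcard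
    have hmiss : ∀ i ∈ R, ∀ j : Fin 2, j ≠ g i → (i, j) ∉ C := by
      intro i hi j hj hmem'
      rw [hCeq] at hmem'
      rcases Finset.mem_union.mp hmem' with h | h
      · exact (Finset.mem_sdiff.mp hi).2
          (Finset.mem_insert_of_mem (Finset.mem_product.mp h).1)
      · obtain ⟨i', hi', heq⟩ := Finset.mem_image.mp h
        have h1 : i' = i := congrArg Prod.fst heq
        have h2 : g i' = j := congrArg Prod.snd heq
        exact hj (h1 ▸ h2).symm
    have hRn : ∀ i ∈ R, i = 1 ∨ i ∈ Sg := by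
      intro i hi
      rw [hRdef, Finset.mem_sdiff] at hi
      have hia : i ≠ a := fun h => hi.2 (h ▸ Finset.mem_insert_self a S₀)
      have : i ∈ insert 1 Sg := by
        rw [← hUn, Finset.mem_sdiff, Finset.mem_singleton]; exact ⟨hi.1, hia⟩
      exact Finset.mem_insert.mp this
    have hkey : ∀ i ∈ R, (i, (0 : Fin 2)) ∉ C := by
      intro i hi
      have hin : ((i : ℕ), (1 : Fin 2)) ∈ C := by
        rcases hRn i hi with h | h
        · rw [h]; exact h11
        · exact hmem i h
      have hg : g i = 1 := by
        by_contra hg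
        exact hmiss i hi 1 (fun h => hg h.symm) hin
      exact hmiss i hi 0 (by rw [hg]; decide)
    have hbR : b ∈ R := by rw [hR]; exact Finset.mem_insert_self _ _
    have heR : e ∈ R := by rw [hR]; exact Finset.mem_insert_of_mem (Finset.mem_singleton_self _)
    by_cases h1R : (1 : ℕ) ∈ R
    · -- 1 is one of b, e
      right; left
      have h10 : ((1 : ℕ), (0 : Fin 2)) ∉ C := hkey 1 h1R
      have h1be : 1 = b ∨ 1 = e := by
        rw [hR, Finset.mem_insert, Finset.mem_singleton] at h1R; exact h1R
      rcases h1be with h | h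
      · refine ⟨h10, e, ?_, hkey e heR⟩
        rcases hRn e heR with h' | h'
        · exact absurd (h'.trans h) (Ne.symm hbe)
        · exact h'
      · refine ⟨h10, b, ?_, hkey b hbR⟩
        rcases hRn b hbR with h' | h'
        · exact absurd (h'.trans h) hbe
        · exact h'
    · right; right
      have hbSg : b ∈ Sg := by
        rcases hRn b hbR with h | h
        · exact absurd (h ▸ hbR) h1R
        · exact h
      have heSg : e ∈ Sg := by
        rcases hRn e heR with h | h
        · exact absurd (h ▸ heR) h1R
        · exact h
      exact ⟨b, hbSg, e, heSg, hbe, hkey b hbR, hkey e heR⟩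
  refine ⟨?_, ?_, main3⟩
  · intro C hRBC h11 hmem
    exact main3 (Finset.Icc 2 (k + 1)) (Finset.Icc_subset_Icc_right (by omega))
      (by rw [Nat.card_Icc]; omega) C hRBC h11 hmem
  · intro C hRBC hmem
    obtain ⟨a, ha, S₀, hS₀, hS₀card, g, hCeq⟩ := hRBC
    have hnode := rbc_nodes hS₀ hCeq
    have ha1 : a = 1 := by
      have h2 : a ∉ Finset.Icc 2 (k + 2) := fun h => (hnode _ (hmem a h)).2 rfl
      rw [Finset.mem_Icc] at ha
      rw [Finset.mem_Icc] at h2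
      omega
    have hsub : C ⊆ Finset.Icc 1 (k + 2) ×ˢ Finset.univ := fun x hx =>
      Finset.mem_product.mpr ⟨(hnode x hx).1, Finset.mem_univ _⟩
    have haS₀ : a ∉ S₀ := fun h => by
      have := hS₀ h; rw [Finset.mem_sdiff, Finset.mem_singleton] at this; exact this.2 rfl
    have hins : insert a S₀ ⊆ Finset.Icc 1 (k + 2) :=
      Finset.insert_subset ha (hS₀.trans Finset.sdiff_subset)
    have hdisj : Disjoint (S₀ ×ˢ (Finset.univ : Finset (Fin 2)))
        ((Finset.Icc 1 (k + 2) \ insert a S₀).image (fun i => (i, g i))) := by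
      rw [Finset.disjoint_left]
      intro x hx hx'
      obtain ⟨i, hi, hix⟩ := Finset.mem_image.mp hx'
      rw [Finset.mem_sdiff] at hi
      have hx1 : x.1 = i := by rw [← hix]
      exact hi.2 (Finset.mem_insert_of_mem (hx1 ▸ (Finset.mem_product.mp hx).1))
    have hcard : C.card = 2 * k := by
      rw [hCeq, Finset.card_union_of_disjoint hdisj, Finset.card_product,
        Finset.card_image_of_injective _ (fun i i' h => (Prod.mk.injEq _ _ _ _ ▸ h).1),
        Finset.card_sdiff_of_subset hins, Finset.card_insert_of_notMem haS₀, hS₀card, Nat.card_Icc]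
      simp only [Finset.card_univ, Fintype.card_fin]
      omega
    have hdec := hRS C hsub hcard
    rw [Decodable] at hdec ⊢
    have heq : (fun x : {y // y ∈ C} => Q x.1.1 x.1.2) = (fun x => P x.1.1 x.1.2) := by
      funext x
      simp only [hQ]
      exact if_neg (ha1 ▸ (hnode x.1 x.2).2)
    rw [heq]
    exact hdec
end
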